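/- arXiv:1801.08315 — 4 statements merged into one kernel-verified Lean document; each statement's English description precedes it below -/
import Mathlib

section
/- Let (S,⊳) be a shelf and A an abelian group. Define C^k = Map(S^k, A) and d^k: C^k → C^{k+1} by (d^k f)(a₁,…,a_{k+1}) = Σ_{i=1}^{k+1} (−1)^{i−1} ( f(a₁,…,â_i,…,a_{k+1}) − f(a₁⊳a_i,…,a_{i−1}⊳a_i, a_{i+1},…,a_{k+1}) ), where â_i denotes omission of the entry a_i. Then d^{k+1} ∘ d^k = 0. -/
/-- The rack differential `d^k : Map(S^k, A) → Map(S^{k+1}, A)`, with the sign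
`(-1)^{i-1}` for `i = 1, …, k+1` written as `(-1)^i` for `i = 0, …, k`. -/
def rackDiff {S A : Type*} [AddCommGroup A] (op : S → S → S) (k : ℕ)
    (f : (Fin k → S) → A) : (Fin (k + 1) → S) → A :=
  fun a => ∑ i : Fin (k + 1), ((-1 : ℤ) ^ (i : ℕ)) •
    (f (fun j => a (i.succAbove j)) -
     f (fun j => if (j : ℕ) < (i : ℕ) then op (a j.castSucc) (a i) else a j.succ))

section Aux

variable {S : Type*} (op : S → S → S)

/-- `E op true x y = op x y`, `E op false x y = x`. -/
def rackE (ε : Bool) (x y : S) : S := if ε then op x y else x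

lemma rackE_key (hSD : ∀ a b c : S, op (op a b) c = op (op a c) (op b c))
    (ε η : Bool) (x y z : S) :
    rackE op ε (rackE op η x z) (rackE op η y z) = rackE op η (rackE op ε x y) z := by
  cases ε <;> cases η <;> simp [rackE]
  exact (hSD x y z).symm

/-- The face maps: `false` is deletion, `true` is act-then-delete. -/
def rackFace (ε : Bool) {m : ℕ} (i : Fin (m + 1)) (a : Fin (m + 1) → S) : Fin m → S :=
  fun j => if (j : ℕ) < (i : ℕ) then rackE op ε (a j.castSucc) (a i) else a j.succ

/-- ℕ-indexed face map. -/
def rackFaceN (ε : Bool) (i : ℕ) (b : ℕ → S) : ℕ → S :=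
  fun j => if j < i then rackE op ε (b j) (b i) else b (j + 1)

/-- Extend a tuple to a total function on ℕ. -/
def extF {m : ℕ} (a : Fin (m + 1) → S) : ℕ → S := fun n => a ⟨min n m, by omega⟩

lemma rackFace_eval (ε : Bool) {m : ℕ} (i : Fin (m + 1)) (a : Fin (m + 1) → S) (j : Fin m) :
    rackFace op ε i a j = rackFaceN op ε (i : ℕ) (extF a) (j : ℕ) := by
  have hj := j.isLt; have hi := i.isLt
  have h1 : extF a (j : ℕ) = a j.castSucc := by
    unfold extF; congr 1; apply Fin.ext; simp only [Fin.coe_castSucc, Fin.val_succ]; omega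
  have h2 : extF a (i : ℕ) = a i := by
    unfold extF; congr 1; apply Fin.ext; simp only [Fin.coe_castSucc, Fin.val_succ]; omega
  have h3 : extF a ((j : ℕ) + 1) = a j.succ := by
    unfold extF; congr 1; apply Fin.ext; simp only [Fin.coe_castSucc, Fin.val_succ]; omega
  unfold rackFace rackFaceN
  rw [h1, h2, h3]

lemma rackFaceN_congr (ε : Bool) (i n : ℕ) {b b' : ℕ → S}
    (h1 : b n = b' n) (h2 : b i = b' i) (h3 : b (n + 1) = b' (n + 1)) :
    rackFaceN op ε i b n = rackFaceN op ε i b' n := by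
  unfold rackFaceN; rw [h1, h2, h3]

lemma extF_rackFace (ε : Bool) {m : ℕ} (i : Fin (m + 2)) (a : Fin (m + 2) → S)
    (n : ℕ) (hn : n ≤ m) :
    extF (rackFace op ε i a) n = rackFaceN op ε (i : ℕ) (extF a) n := by
  have h : extF (rackFace op ε i a) n = rackFace op ε i a ⟨n, by omega⟩ := by
    unfold extF; congr 1; apply Fin.ext; simp only [Fin.coe_castSucc, Fin.val_succ]; omega
  rw [h, rackFace_eval]

lemma rackFaceN_swap (hSD : ∀ a b c : S, op (op a b) c = op (op a c) (op b c))
    (b : ℕ → S) (i j : ℕ) (h : j < i) (ε η : Bool) (n : ℕ) :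
    rackFaceN op ε j (rackFaceN op η i b) n
      = rackFaceN op η (i - 1) (rackFaceN op ε j b) n := by
  obtain ⟨i, rfl⟩ : ∃ i', i = i' + 1 := ⟨i - 1, by omega⟩
  simp only [rackFaceN, Nat.add_sub_cancel]
  split_ifs <;>
    first
      | rfl
      | omega
      | exact rackE_key op hSD ε η _ _ _
      | exact (rackE_key op hSD ε η _ _ _).symm

lemma rackFace_swap (hSD : ∀ a b c : S, op (op a b) c = op (op a c) (op b c))
    {m : ℕ} (a : Fin (m + 2) → S) (i i' : Fin (m + 2)) (j j' : Fin (m + 1)) (ε η : Bool)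
    (h : (j : ℕ) < (i : ℕ)) (hi' : (i' : ℕ) = (j : ℕ)) (hj' : (j' : ℕ) = (i : ℕ) - 1) :
    rackFace op ε j (rackFace op η i a) = rackFace op η j' (rackFace op ε i' a) := by
  funext n
  have hn := n.isLt; have hi := i.isLt; have hj := j.isLt; have hj'2 := j'.isLt
  rw [rackFace_eval, rackFace_eval]
  have L : rackFaceN op ε (j : ℕ) (extF (rackFace op η i a)) (n : ℕ)
      = rackFaceN op ε (j : ℕ) (rackFaceN op η (i : ℕ) (extF a)) (n : ℕ) :=
    rackFaceN_congr op ε _ _ (extF_rackFace op η i a _ (by omega))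
      (extF_rackFace op η i a _ (by omega)) (extF_rackFace op η i a _ (by omega))
  have R : rackFaceN op η (j' : ℕ) (extF (rackFace op ε i' a)) (n : ℕ)
      = rackFaceN op η (j' : ℕ) (rackFaceN op ε (i' : ℕ) (extF a)) (n : ℕ) :=
    rackFaceN_congr op η _ _ (extF_rackFace op ε i' a _ (by omega))
      (extF_rackFace op ε i' a _ (by omega)) (extF_rackFace op ε i' a _ (by omega))
  rw [L, R, hi', hj']
  exact rackFaceN_swap op hSD (extF a) (i : ℕ) (j : ℕ) h ε η (n : ℕ)

/-- Sign of the term indexed by `(i, ε)`. -/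
def rackSg (n : ℕ) (ε : Bool) : ℤ := (-1) ^ n * (if ε then -1 else 1)

lemma rackSg_cancel {a b c d : ℕ} (h : a + b = c + d + 1 ∨ c + d = a + b + 1) (ε η : Bool) :
    rackSg a ε * rackSg b η + rackSg c η * rackSg d ε = 0 := by
  have key : ((-1 : ℤ)) ^ (c + d) = -(-1 : ℤ) ^ (a + b) := by
    rcases h with h | h
    · rw [h, pow_succ]; ring
    · rw [h, pow_succ]; ring
  have e1 : (-1 : ℤ) ^ c * (-1) ^ d = -((-1 : ℤ) ^ a * (-1) ^ b) := by
    rw [← pow_add, ← pow_add, key]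
  cases ε <;> cases η <;> simp [rackSg] <;>
    first
      | linear_combination e1
      | linear_combination -e1

end Aux

section Main

variable {S A : Type*} [AddCommGroup A] (op : S → S → S)

lemma rackDiff_apply (k : ℕ) (f : (Fin k → S) → A) (a : Fin (k + 1) → S) :
    rackDiff op k f a
      = ∑ p : Fin (k + 1) × Bool, rackSg (p.1 : ℕ) p.2 • f (rackFace op p.2 p.1 a) := by
  rw [Fintype.sum_prod_type]
  show ∑ i : Fin (k + 1), _ = _
  refine Finset.sum_congr rfl fun i _ => ?_
  rw [Fintype.sum_bool]
  have h1 : (fun j => a (i.succAbove j)) = rackFace op false i a := by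
    funext j
    by_cases hb : (j : ℕ) < (i : ℕ)
    · have hb' : j.castSucc < i := by rw [Fin.lt_def]; simpa using hb
      simp [rackFace, rackE, Fin.succAbove, hb, hb']
    · have hb' : ¬ j.castSucc < i := by rw [Fin.lt_def]; simpa using hb
      simp [rackFace, rackE, Fin.succAbove, hb, hb']
  have h2 : (fun j : Fin k => if (j : ℕ) < (i : ℕ) then op (a j.castSucc) (a i) else a j.succ)
      = rackFace op true i a := by
    funext j; simp [rackFace, rackE]
  rw [h1, h2]
  simp [rackSg, smul_sub, neg_smul, sub_eq_add_neg]
  abel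

/-- The involution pairing up cancelling terms of `d ∘ d`. -/
def rackSwapIdx (k : ℕ) (x : (Fin (k + 2) × Bool) × (Fin (k + 1) × Bool)) :
    (Fin (k + 2) × Bool) × (Fin (k + 1) × Bool) :=
  if h : (x.2.1 : ℕ) < (x.1.1 : ℕ) then
    ((⟨(x.2.1 : ℕ), by have := x.2.1.isLt; omega⟩, x.2.2),
     (⟨(x.1.1 : ℕ) - 1, by have := x.1.1.isLt; omega⟩, x.1.2))
  else
    ((⟨(x.2.1 : ℕ) + 1, by have := x.2.1.isLt; omega⟩, x.2.2),
     (⟨(x.1.1 : ℕ), by have := x.2.1.isLt; omega⟩, x.1.2))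

end Main

theorem rackDiff_squared {S A : Type*} [AddCommGroup A] (op : S → S → S)
    (hSD : ∀ a b c : S, op (op a b) c = op (op a c) (op b c))
    (k : ℕ) (f : (Fin k → S) → A) :
    rackDiff op (k + 1) (rackDiff op k f) = 0 := by
  funext a
  show rackDiff op (k + 1) (rackDiff op k f) a = 0
  rw [rackDiff_apply]
  have step : ∀ p : Fin (k + 2) × Bool,
      rackSg (p.1 : ℕ) p.2 • rackDiff op k f (rackFace op p.2 p.1 a)
        = ∑ q : Fin (k + 1) × Bool,
            (rackSg (p.1 : ℕ) p.2 * rackSg (q.1 : ℕ) q.2) •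
              f (rackFace op q.2 q.1 (rackFace op p.2 p.1 a)) := by
    intro p
    rw [rackDiff_apply, Finset.smul_sum]
    exact Finset.sum_congr rfl fun q _ => smul_smul _ _ _
  rw [Finset.sum_congr rfl fun p _ => step p, ← Finset.sum_product',
    Finset.univ_product_univ]
  refine Finset.sum_ninvolution (rackSwapIdx k) ?_ ?_ (fun x => Finset.mem_univ _) ?_
  · -- cancellation
    rintro ⟨⟨i, ε⟩, ⟨j, η⟩⟩
    by_cases h : (j : ℕ) < (i : ℕ)
    · have hσ : rackSwapIdx k ((i, ε), (j, η))
          = ((⟨(j : ℕ), by have := j.isLt; omega⟩, η),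
             (⟨(i : ℕ) - 1, by have := i.isLt; omega⟩, ε)) := by
        simp [rackSwapIdx, h]
      rw [hσ]
      have harg := rackFace_swap op hSD a i
        (⟨(j : ℕ), by have := j.isLt; omega⟩ : Fin (k + 2)) j
        (⟨(i : ℕ) - 1, by have := i.isLt; omega⟩ : Fin (k + 1)) η ε h rfl rfl
      show (rackSg (i : ℕ) ε * rackSg (j : ℕ) η) • f (rackFace op η j (rackFace op ε i a))
        + (rackSg (j : ℕ) η * rackSg ((i : ℕ) - 1) ε) •
            f (rackFace op ε _ (rackFace op η _ a)) = 0
      rw [harg, ← add_smul, rackSg_cancel (by omega) ε η, zero_smul]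
    · have hσ : rackSwapIdx k ((i, ε), (j, η))
          = ((⟨(j : ℕ) + 1, by have := j.isLt; omega⟩, η),
             (⟨(i : ℕ), by have := j.isLt; omega⟩, ε)) := by
        simp [rackSwapIdx, h]
      rw [hσ]
      have harg := rackFace_swap op hSD a
        (⟨(j : ℕ) + 1, by have := j.isLt; omega⟩ : Fin (k + 2)) i
        (⟨(i : ℕ), by have := j.isLt; omega⟩ : Fin (k + 1)) j ε η
        (by simp; omega) (by simp) (by simp)
      show (rackSg (i : ℕ) ε * rackSg (j : ℕ) η) • f (rackFace op η j (rackFace op ε i a))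
        + (rackSg ((j : ℕ) + 1) η * rackSg (i : ℕ) ε) •
            f (rackFace op ε _ (rackFace op η _ a)) = 0
      rw [← harg, ← add_smul, rackSg_cancel (by omega) ε η, zero_smul]
  · -- no fixed point needed
    rintro ⟨⟨i, ε⟩, ⟨j, η⟩⟩ - hc
    have h1 := congrArg (fun y : (Fin (k + 2) × Bool) × (Fin (k + 1) × Bool) => (y.1.1 : ℕ)) hc
    have h2 := congrArg (fun y : (Fin (k + 2) × Bool) × (Fin (k + 1) × Bool) => (y.2.1 : ℕ)) hc
    simp only [rackSwapIdx] at h1 h2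
    split_ifs at h1 h2 <;> simp at h1 h2 <;> omega
  · -- involution
    rintro ⟨⟨i, ε⟩, ⟨j, η⟩⟩
    by_cases h : (j : ℕ) < (i : ℕ)
    · simp only [rackSwapIdx, h, dite_true, dite_false]
      split_ifs <;>
        first
          | omega
          | (ext <;> simp <;> omega)
    · simp only [rackSwapIdx, h, dite_true, dite_false]
      split_ifs <;>
        first
          | omega
          | (ext <;> simp <;> omega)
end

section
/- Let (S,⊳) be a quandle and A an abelian group. The subspaces C^k_Q = { f: S^k → A | f(a₁,…,a_k) = 0 whenever a_i = a_{i+1} for some i } are preserved by the rack differential d^k, i.e., d^k(C^k_Q) ⊆ C^{k+1}_Q. -/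
/-- `f` vanishes on tuples with two equal consecutive entries. -/
def IsQuandleCochain {S A : Type*} [AddCommGroup A] {k : ℕ}
    (f : (Fin k → S) → A) : Prop :=
  ∀ a : Fin k → S, ∀ i j : Fin k, (i : ℕ) + 1 = (j : ℕ) → a i = a j → f a = 0

private lemma succAbove_mk_of_le {n : ℕ} (c : Fin (n + 1)) (m : ℕ) (h : m < n)
    (hcm : (c : ℕ) ≤ m) : c.succAbove ⟨m, h⟩ = ⟨m + 1, Nat.succ_lt_succ h⟩ := by
  rw [Fin.succAbove_of_le_castSucc _ _ (by simpa [Fin.le_def] using hcm)]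
  rfl

private lemma succAbove_mk_of_lt {n : ℕ} (c : Fin (n + 1)) (m : ℕ) (h : m < n)
    (hmc : m < (c : ℕ)) : c.succAbove ⟨m, h⟩ = ⟨m, Nat.lt_succ_of_lt h⟩ := by
  rw [Fin.succAbove_of_castSucc_lt _ _ (by simpa [Fin.lt_def] using hmc)]
  rfl

theorem quandle_subcomplex_preserved {S A : Type*} [AddCommGroup A]
    (op : S → S → S)
    (hSD : ∀ a b c : S, op (op a b) c = op (op a c) (op b c))
    (hbij : ∀ b : S, Function.Bijective (fun a => op a b))
    (hidem : ∀ a : S, op a a = a)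
    (k : ℕ) (f : (Fin k → S) → A) (hf : IsQuandleCochain f) :
    IsQuandleCochain (rackDiff op k f) := by
  intro a p q hpq hap
  have hq : (q : ℕ) ≤ k := Nat.lt_succ_iff.mp q.isLt
  have hpk : (p : ℕ) < k := by omega
  have hpqne : p ≠ q := fun h => by simp [h] at hpq
  set G : Fin (k + 1) → A := fun c => ((-1 : ℤ) ^ (c : ℕ)) •
    (f (fun j => a (c.succAbove j)) -
     f (fun j => if (j : ℕ) < (c : ℕ) then op (a j.castSucc) (a c) else a j.succ)) with hG
  have hsum : rackDiff op k f a = ∑ c : Fin (k + 1), G c := rfl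
  have hzero : ∀ c : Fin (k + 1), c ≠ p → c ≠ q → G c = 0 := by
    intro c hcp hcq
    have hc : (c : ℕ) < (p : ℕ) ∨ (q : ℕ) < (c : ℕ) := by
      have h1 : (c : ℕ) ≠ (p : ℕ) := Fin.val_ne_of_ne hcp
      have h2 : (c : ℕ) ≠ (q : ℕ) := Fin.val_ne_of_ne hcq
      omega
    rcases hc with hc | hc
    · -- c < p : equal entries at positions p-1, p
      have hm1 : (p : ℕ) - 1 < k := by omega
      have hu : (((⟨(p : ℕ) - 1, hm1⟩ : Fin k) : ℕ)) + 1 = ((⟨(p : ℕ), hpk⟩ : Fin k) : ℕ) := by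
        simp; omega
      have hs1 : c.succAbove ⟨(p : ℕ) - 1, hm1⟩ = p := by
        rw [succAbove_mk_of_le c _ _ (by omega)]
        exact Fin.ext (by simp; omega)
      have hs2 : c.succAbove ⟨(p : ℕ), hpk⟩ = q := by
        rw [succAbove_mk_of_le c _ _ (by omega)]
        exact Fin.ext (by simpa using hpq)
      have h1 : f (fun j => a (c.succAbove j)) = 0 := by
        apply hf _ ⟨(p : ℕ) - 1, hm1⟩ ⟨(p : ℕ), hpk⟩ hu
        simp only [hs1, hs2, hap]
      have h2 : f (fun j => if (j : ℕ) < (c : ℕ) then op (a j.castSucc) (a c) else a j.succ)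
          = 0 := by
        apply hf _ ⟨(p : ℕ) - 1, hm1⟩ ⟨(p : ℕ), hpk⟩ hu
        have e1 : ¬ (((⟨(p : ℕ) - 1, hm1⟩ : Fin k) : ℕ) < (c : ℕ)) := by simp; omega
        have e2 : ¬ (((⟨(p : ℕ), hpk⟩ : Fin k) : ℕ) < (c : ℕ)) := by simp; omega
        simp only [e1, e2, if_false]
        have r1 : (⟨(p : ℕ) - 1, hm1⟩ : Fin k).succ = p := Fin.ext (by simp; omega)
        have r2 : (⟨(p : ℕ), hpk⟩ : Fin k).succ = q := Fin.ext (by simpa using hpq)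
        rw [r1, r2, hap]
      rw [hG]; simp [h1, h2]
    · -- q < c : equal entries at positions p, p+1
      have hck : (c : ℕ) ≤ k := Nat.lt_succ_iff.mp c.isLt
      have hq1 : (q : ℕ) < k := by omega
      have hu : (((⟨(p : ℕ), hpk⟩ : Fin k) : ℕ)) + 1 = ((⟨(q : ℕ), hq1⟩ : Fin k) : ℕ) := by
        simpa using hpq
      have hs1 : c.succAbove ⟨(p : ℕ), hpk⟩ = p := by
        rw [succAbove_mk_of_lt c _ _ (by omega)]
      have hs2 : c.succAbove ⟨(q : ℕ), hq1⟩ = q := by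
        rw [succAbove_mk_of_lt c _ _ (by omega)]
      have h1 : f (fun j => a (c.succAbove j)) = 0 := by
        apply hf _ ⟨(p : ℕ), hpk⟩ ⟨(q : ℕ), hq1⟩ hu
        simp only [hs1, hs2, hap]
      have h2 : f (fun j => if (j : ℕ) < (c : ℕ) then op (a j.castSucc) (a c) else a j.succ)
          = 0 := by
        apply hf _ ⟨(p : ℕ), hpk⟩ ⟨(q : ℕ), hq1⟩ hu
        have e1 : (((⟨(p : ℕ), hpk⟩ : Fin k) : ℕ) < (c : ℕ)) := by simp; omega
        have e2 : (((⟨(q : ℕ), hq1⟩ : Fin k) : ℕ) < (c : ℕ)) := by simp; omega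
        simp only [e1, e2, if_true]
        have r1 : (⟨(p : ℕ), hpk⟩ : Fin k).castSucc = p := Fin.ext (by simp)
        have r2 : (⟨(q : ℕ), hq1⟩ : Fin k).castSucc = q := Fin.ext (by simp)
        rw [r1, r2, hap]
      rw [hG]; simp [h1, h2]
  have hface : (fun j : Fin k => a (p.succAbove j)) = (fun j => a (q.succAbove j)) := by
    funext u
    rcases lt_trichotomy ((u : ℕ)) ((p : ℕ)) with h | h | h
    · have e1 : p.succAbove u = u.castSucc :=
        Fin.succAbove_of_castSucc_lt _ _ (by simpa [Fin.lt_def] using h)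
      have e2 : q.succAbove u = u.castSucc :=
        Fin.succAbove_of_castSucc_lt _ _ (by simp [Fin.lt_def]; omega)
      rw [e1, e2]
    · have e1 : p.succAbove u = u.succ :=
        Fin.succAbove_of_le_castSucc _ _ (by simp [Fin.le_def]; omega)
      have e2 : q.succAbove u = u.castSucc :=
        Fin.succAbove_of_castSucc_lt _ _ (by simp [Fin.lt_def]; omega)
      rw [e1, e2]
      have h1 : u.succ = q := Fin.ext (by simp; omega)
      have h2 : u.castSucc = p := Fin.ext (by simp; omega)
      rw [h1, h2, hap]
    · have e1 : p.succAbove u = u.succ :=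
        Fin.succAbove_of_le_castSucc _ _ (by simp [Fin.le_def]; omega)
      have e2 : q.succAbove u = u.succ :=
        Fin.succAbove_of_le_castSucc _ _ (by simp [Fin.le_def]; omega)
      rw [e1, e2]
  have htw : (fun j : Fin k => if (j : ℕ) < (p : ℕ) then op (a j.castSucc) (a p) else a j.succ)
      = (fun j : Fin k => if (j : ℕ) < (q : ℕ) then op (a j.castSucc) (a q) else a j.succ) := by
    funext u
    rcases lt_trichotomy ((u : ℕ)) ((p : ℕ)) with h | h | h
    · have e1 : (u : ℕ) < (q : ℕ) := by omega
      simp only [h, e1, if_true, hap]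
    · have e1 : ¬ ((u : ℕ) < (p : ℕ)) := by omega
      have e2 : (u : ℕ) < (q : ℕ) := by omega
      simp only [e1, e2, if_true, if_false]
      have h1 : u.succ = q := Fin.ext (by simp; omega)
      have h2 : u.castSucc = p := Fin.ext (by simp; omega)
      rw [h1, h2, hap, hidem]
    · have e1 : ¬ ((u : ℕ) < (p : ℕ)) := by omega
      have e2 : ¬ ((u : ℕ) < (q : ℕ)) := by omega
      simp only [e1, e2, if_false]
  have hGpq : G q = -G p := by
    rw [hG]
    simp only
    rw [hface, htw, ← hpq, pow_succ, ← neg_smul]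
    ring_nf
  rw [hsum, ← Finset.sum_subset (Finset.subset_univ ({p, q} : Finset (Fin (k + 1))))]
  · rw [Finset.sum_pair hpqne, hGpq, add_neg_cancel]
  · intro c _ hc
    simp only [Finset.mem_insert, Finset.mem_singleton, not_or] at hc
    exact hzero c hc.1 hc.2
end

section
/- Let (S,σ) be a birack with σ(a,b) = (b_a, a^b). The structure rack operation a ⊳_σ b is trivial (a ⊳_σ b = a for all a,b) if and only if σ is involutive, i.e., σ∘σ = id on S². -/
/-- `σ × id` on `S × S × S`. -/
def sigma1 {S : Type*} (σ : S × S → S × S) : S × S × S → S × S × S :=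
  fun p => ((σ (p.1, p.2.1)).1, (σ (p.1, p.2.1)).2, p.2.2)

/-- `id × σ` on `S × S × S`. -/
def sigma2 {S : Type*} (σ : S × S → S × S) : S × S × S → S × S × S :=
  fun p => (p.1, σ p.2)

/-- A birack: an invertible set-theoretic Yang–Baxter solution `σ (a, b) = (b_a, a^b)`
which is left non-degenerate (all maps `b ↦ b_a` are bijective) and right
non-degenerate (all maps `a ↦ a^b` are bijective). -/
structure IsBirack {S : Type*} (σ : S × S → S × S) : Prop where
  bij : Function.Bijective σ
  ybe : sigma1 σ ∘ sigma2 σ ∘ sigma1 σ = sigma2 σ ∘ sigma1 σ ∘ sigma2 σ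
  lnd : ∀ a : S, Function.Bijective (fun b => (σ (a, b)).1)
  rnd : ∀ b : S, Function.Bijective (fun a => (σ (a, b)).2)

/-- `op` is the structure rack operation of `σ`: reading the defining diagram,
`a ⊳_σ b = (a^c)_b` where `c` is the unique element with `c_a = b`. -/
def IsStructureRackOp {S : Type*} (σ : S × S → S × S) (op : S → S → S) : Prop :=
  ∀ a b c : S, (σ (a, c)).1 = b → op a b = (σ (b, (σ (a, c)).2)).1

theorem structure_rack_trivial_iff_involutive {S : Type*} (σ : S × S → S × S)
    (hσ : IsBirack σ) (op : S → S → S) (hop : IsStructureRackOp σ op) :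
    (∀ a b : S, op a b = a) ↔ σ ∘ σ = id := by
  constructor
  · intro h
    have fst : ∀ x y : S, (σ (σ (x, y))).1 = x := by
      intro x y
      have h1 := hop x (σ (x, y)).1 y rfl
      rw [h] at h1
      rw [show σ (σ (x, y)) = σ ((σ (x, y)).1, (σ (x, y)).2) by rw [Prod.mk.eta]]
      exact h1.symm
    funext p
    obtain ⟨a, c⟩ := p
    simp only [Function.comp_apply, id_eq]
    have h1 : (σ (σ (a, c))).1 = a := fst a c
    set c' := (σ (σ (a, c))).2 with hc'
    have h2 : (σ (a, c')).1 = (σ (a, c)).1 := by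
      have h3 := fst (σ (a, c)).1 (σ (a, c)).2
      rw [Prod.mk.eta] at h3
      rw [show ((a : S), c') = σ (σ (a, c)) from (Prod.ext h1.symm rfl)]
      rw [show σ (σ (σ (a, c))) = σ ((σ (σ (a, c))).1, (σ (σ (a, c))).2) by rw [Prod.mk.eta]]
      rw [show σ ((σ (σ (a, c))).1, (σ (σ (a, c))).2) = σ (σ ((σ (a, c)).1, (σ (a, c)).2)) by rw [Prod.mk.eta]]
      exact h3
    have h4 : c' = c := (hσ.lnd a).1 h2
    exact Prod.ext h1 h4
  · intro h a b
    obtain ⟨c, hc⟩ := (hσ.lnd a).2 b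
    rw [hop a b c hc, ← hc]
    rw [show ((σ ((a : S), c)).1, (σ (a, c)).2) = σ (a, c) from Prod.mk.eta]
    have := congrFun h (a, c)
    simp only [Function.comp_apply, id_eq] at this
    rw [this]
end

section
/- Let (S,σ) be a birack, ⊳_σ its structure rack, σ' the map σ'(a,b) = (b, a⊳_σ b), and J: Sⁿ → Sⁿ the guitar map. Then for each 1 ≤ i ≤ n−1, J ∘ σ_i = σ'_i ∘ J, where σ_i = id^{i−1} × σ × id^{n−i−1} and σ'_i = id^{i−1} × σ' × id^{n−i−1}. Consequently σ and σ' induce isomorphic actions of the positive braid monoid on Sⁿ. -/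
/-- Apply the left-translation operation `ld x y = y_x` by each element of the
list in turn. -/
def guitarAux {S : Type*} (ld : S → S → S) : List S → S → S
  | [], x => x
  | h :: t, x => ld h (guitarAux ld t x)

/-- The guitar map `J : Sⁿ → Sⁿ`,
`J(a₁, …, aₙ)ᵢ = (…((a_i)_{a_{i-1}})…)_{a₁}`, where `y_x = (σ (x, y)).1`. -/
def guitar {S : Type*} (σ : S × S → S × S) (n : ℕ) (a : Fin n → S) : Fin n → S :=
  fun i => guitarAux (fun x y => (σ (x, y)).1)
    (List.ofFn (fun j : Fin (i : ℕ) => a ⟨j, j.isLt.trans i.isLt⟩)) (a i)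

/-- `σᵢ = id^{i} × σ × id^{n-i-2} : Sⁿ → Sⁿ` (0-based), applying `σ` to the
components in positions `i` and `i + 1`. -/
def braidAct {S : Type*} (σ : S × S → S × S) (n i : ℕ) (hi : i + 1 < n)
    (a : Fin n → S) : Fin n → S :=
  fun j =>
    if (j : ℕ) = i then (σ (a ⟨i, Nat.lt_of_succ_lt hi⟩, a ⟨i + 1, hi⟩)).1
    else if (j : ℕ) = i + 1 then (σ (a ⟨i, Nat.lt_of_succ_lt hi⟩, a ⟨i + 1, hi⟩)).2
    else a j

namespace GuitarEntwines

variable {S : Type*} (σ : S × S → S × S)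

/-- Left translation `y ↦ y_x`. -/
def L (x y : S) : S := (σ (x, y)).1

/-- Right translation `x ↦ x^y`. -/
def R (x y : S) : S := (σ (x, y)).2

variable {σ}

theorem ybe_fst (hσ : IsBirack σ) (x y z : S) :
    L σ (L σ x y) (L σ (R σ x y) z) = L σ x (L σ y z) := by
  have h := congrFun hσ.ybe (x, y, z)
  simp only [Function.comp_apply, sigma1, sigma2, Prod.mk.injEq] at h
  exact h.1

theorem ybe_snd (hσ : IsBirack σ) (x y z : S) :
    R σ (L σ x y) (L σ (R σ x y) z) = L σ (R σ x (L σ y z)) (R σ y z) := by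
  have h := congrFun hσ.ybe (x, y, z)
  simp only [Function.comp_apply, sigma1, sigma2, Prod.mk.injEq] at h
  exact congrArg Prod.fst h.2

/-- Each left translation is an endomorphism of the structure rack. -/
theorem op_hom (hσ : IsBirack σ) {op : S → S → S} (hop : IsStructureRackOp σ op)
    (x a b : S) : L σ x (op a b) = op (L σ x a) (L σ x b) := by
  obtain ⟨c, hc'⟩ := (hσ.lnd a).2 b
  have hc : L σ a c = b := hc'
  have h1 : op a b = L σ b (R σ a c) := hop a b c hc
  have h2 : op (L σ x a) (L σ x b) = L σ (L σ x b) (R σ (L σ x a) (L σ (R σ x a) c)) := by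
    apply hop (L σ x a) (L σ x b) (L σ (R σ x a) c)
    have h := ybe_fst hσ x a c
    rw [hc] at h
    exact h
  rw [h1, h2, ybe_snd hσ x a c, hc, ybe_fst hσ x b (R σ a c)]

theorem guitarAux_append (ld : S → S → S) (l₁ l₂ : List S) (x : S) :
    guitarAux ld (l₁ ++ l₂) x = guitarAux ld l₁ (guitarAux ld l₂ x) := by
  induction l₁ with
  | nil => rfl
  | cons h t ih => simp [guitarAux, ih]

theorem guitarAux_op (hσ : IsBirack σ) {op : S → S → S} (hop : IsStructureRackOp σ op)
    (l : List S) (a b : S) :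
    guitarAux (L σ) l (op a b) = op (guitarAux (L σ) l a) (guitarAux (L σ) l b) := by
  induction l with
  | nil => rfl
  | cons h t ih => simp [guitarAux, ih, op_hom hσ hop]

variable (σ)

/-- The prefix list `[a₀, …, a_{m-1}]`. -/
def pre {n : ℕ} (a : Fin n → S) (m : ℕ) (hm : m ≤ n) : List S :=
  List.ofFn (fun k : Fin m => a ⟨k, lt_of_lt_of_le k.isLt hm⟩)

variable {σ}

theorem pre_congr {n : ℕ} (a b : Fin n → S) (m : ℕ) (hm : m ≤ n)
    (h : ∀ k : ℕ, ∀ hk : k < n, k < m → a ⟨k, hk⟩ = b ⟨k, hk⟩) :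
    pre a m hm = pre b m hm := by
  unfold pre
  congr 1
  funext k
  exact h k _ k.isLt

theorem pre_succ {n : ℕ} (a : Fin n → S) (m : ℕ) (hm : m + 1 ≤ n) :
    pre a (m + 1) hm = pre a m (Nat.le_of_succ_le hm) ++ [a ⟨m, hm⟩] := by
  unfold pre
  rw [List.ofFn_succ']
  simp [List.concat_eq_append, Fin.last]

theorem pre_eq_of_eq {n : ℕ} (a : Fin n → S) (m m' : ℕ) (h : m = m') (hm : m ≤ n)
    (hm' : m' ≤ n) : pre a m hm = pre a m' hm' := by
  subst h; rfl

theorem guitar_apply {n : ℕ} (a : Fin n → S) (j : Fin n) :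
    guitar σ n a j = guitarAux (L σ) (pre a (j : ℕ) j.isLt.le) (a j) := rfl

end GuitarEntwines

open GuitarEntwines in
theorem guitar_entwines {S : Type*} (σ : S × S → S × S) (hσ : IsBirack σ)
    (op : S → S → S) (hop : IsStructureRackOp σ op)
    (σ' : S × S → S × S) (hσ' : ∀ a b, σ' (a, b) = (b, op a b))
    (n i : ℕ) (hi : i + 1 < n) :
    guitar σ n ∘ braidAct σ n i hi = braidAct σ' n i hi ∘ guitar σ n := by
  funext a
  funext j
  set a' := braidAct σ n i hi a with ha'
  have hiN : i < n := Nat.lt_of_succ_lt hi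
  have hai : a' ⟨i, hiN⟩ = L σ (a ⟨i, hiN⟩) (a ⟨i + 1, hi⟩) := by
    simp [ha', braidAct, L]
  have hai1 : a' ⟨i + 1, hi⟩ = R σ (a ⟨i, hiN⟩) (a ⟨i + 1, hi⟩) := by
    simp [ha', braidAct, R]
  have hother : ∀ k : ℕ, ∀ hk : k < n, k ≠ i → k ≠ i + 1 → a' ⟨k, hk⟩ = a ⟨k, hk⟩ := by
    intro k hk h1 h2
    simp [ha', braidAct, h1, h2]
  -- the prefixes of length ≤ i agree
  have hpre : ∀ m : ℕ, ∀ hm : m ≤ n, m ≤ i → pre a' m hm = pre a m hm := by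
    intro m hm hmi
    exact pre_congr a' a m hm (fun k hk hkm => hother k hk (by omega) (by omega))
  -- value of the guitar map of `a` at positions `i` and `i+1`
  have hJ : ∀ k : ℕ, ∀ hk : k < n,
      guitar σ n a ⟨k, hk⟩ = guitarAux (L σ) (pre a k hk.le) (a ⟨k, hk⟩) := fun k hk => rfl
  have hJ' : ∀ k : ℕ, ∀ hk : k < n,
      guitar σ n a' ⟨k, hk⟩ = guitarAux (L σ) (pre a' k hk.le) (a' ⟨k, hk⟩) := fun k hk => rfl
  show guitar σ n a' j = braidAct σ' n i hi (guitar σ n a) j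
  rcases Nat.lt_trichotomy (j : ℕ) i with hj | hj | hj
  · -- case j < i
    have hj1 : (j : ℕ) ≠ i := by omega
    have hj2 : (j : ℕ) ≠ i + 1 := by omega
    have hjj : j = ⟨(j : ℕ), j.isLt⟩ := rfl
    rw [braidAct]
    simp only [hj1, hj2, if_false]
    rw [guitar_apply, guitar_apply]
    have h1 : a' j = a j := by rw [hjj]; exact hother _ _ hj1 hj2
    rw [h1, hpre _ _ (le_of_lt hj)]
  · -- case j = i
    have hjj : j = ⟨i, hiN⟩ := Fin.ext hj
    subst hjj
    rw [braidAct]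
    simp only [hj, if_pos rfl, hσ']
    -- RHS = guitar σ n a ⟨i+1, hi⟩
    rw [hJ' i hiN, hJ i.succ hi, hai]
    rw [pre_succ a i hi.le, guitarAux_append, hpre i hiN.le le_rfl]
    rfl
  · rcases Nat.lt_or_ge (i + 1) (j : ℕ) with hj' | hj'
    · -- case j > i + 1
      have hj1 : (j : ℕ) ≠ i := by omega
      have hj2 : (j : ℕ) ≠ i + 1 := by omega
      have hjj : j = ⟨(j : ℕ), j.isLt⟩ := rfl
      rw [braidAct]
      simp only [hj1, hj2, if_false]
      rw [guitar_apply, guitar_apply]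
      have h1 : a' j = a j := by rw [hjj]; exact hother _ _ hj1 hj2
      rw [h1]
      -- remains: the initial segments give the same composite translation
      have key : ∀ m : ℕ, ∀ hm : m ≤ n, i + 2 ≤ m → ∀ y,
          guitarAux (L σ) (pre a' m hm) y = guitarAux (L σ) (pre a m hm) y := by
        intro m
        induction m with
        | zero => intro _ h; omega
        | succ m ih =>
          intro hm hm2 y
          rcases Nat.lt_or_ge m (i + 2) with hcase | hcase
          · -- m + 1 = i + 2
            have hmeq : m = i + 1 := by omega
            subst hmeq
            rw [pre_succ a' (i + 1) hm, pre_succ a (i + 1) hm,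
              pre_succ a' i (Nat.le_of_succ_le hm), pre_succ a i (Nat.le_of_succ_le hm),
              hpre i _ le_rfl]
            rw [guitarAux_append, guitarAux_append, guitarAux_append, guitarAux_append]
            have h2 : a' ⟨i, _⟩ = L σ (a ⟨i, hiN⟩) (a ⟨i + 1, hi⟩) := hai
            have h3 : a' ⟨i + 1, hm⟩ = R σ (a ⟨i, hiN⟩) (a ⟨i + 1, hi⟩) := hai1
            rw [h2, h3]
            show guitarAux (L σ) _ (L σ _ (L σ _ y)) = guitarAux (L σ) _ (L σ _ (L σ _ y))
            rw [ybe_fst hσ]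
          · -- m ≥ i + 2
            rw [pre_succ a' m hm, pre_succ a m hm, guitarAux_append, guitarAux_append]
            rw [hother m (lt_of_lt_of_le (Nat.lt_succ_self m) hm) (by omega) (by omega)]
            show guitarAux (L σ) _ (L σ _ y) = guitarAux (L σ) _ (L σ _ y)
            exact ih (Nat.le_of_succ_le hm) hcase _
      exact key (j : ℕ) j.isLt.le (by omega) (a j)
    · -- case j = i + 1
      have hjeq : (j : ℕ) = i + 1 := by omega
      have hjj : j = ⟨i + 1, hi⟩ := Fin.ext hjeq
      subst hjj
      rw [braidAct]
      simp only [hjeq, if_pos rfl, hσ']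
      have hne : i + 1 ≠ i := by omega
      simp only [hne, if_false, if_pos rfl]
      -- RHS = op (J a)_i (J a)_{i+1}
      rw [hJ' (i + 1) hi, hJ i hiN, hJ i.succ hi, hai1]
      rw [pre_succ a' i hi.le, hpre i hiN.le le_rfl, hai,
        pre_succ a i hi.le, guitarAux_append, guitarAux_append]
      show guitarAux (L σ) _ (L σ (L σ _ _) (R σ _ _)) =
        op (guitarAux (L σ) _ (a ⟨i, hiN⟩)) (guitarAux (L σ) _ (L σ _ _))
      rw [← guitarAux_op hσ hop]
      congr 1
      exact (hop (a ⟨i, hiN⟩) (L σ (a ⟨i, hiN⟩) (a ⟨i + 1, hi⟩)) (a ⟨i + 1, hi⟩) rfl).symm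
end
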